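/- If r : [0, ∞) → (0, ∞) is differentiable and satisfies r' = −c r³ + O(r⁵) as r → 0 in the sense that |r'(t) + c r(t)³| ≤ K r(t)⁵ for all t, with c > 0, K ≥ 0, and r(t) → 0 as t → ∞, then lim_{t→∞} t·r(t)² = 1/(2c). -/

import Mathlib

/-!
Put `u = r⁻²`. The cubic term gives `u' = -2 r' / r³ = 2c + O(r²)`, so `u' → 2c` because `r → 0`,
and a function whose derivative tends to `L` grows like `L t` (mean value theorem). Hence
`t r(t)² = (u(t) / t)⁻¹ → 1 / (2c)`; the quintic remainder only enters through the `O(r²)` term,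
which is why the exponent `1/2` is dictated by the cubic term alone.
-/

open Filter Topology Asymptotics Set

theorem Asymptotics.isLittleO_id_atTop_of_tendsto_deriv_zero {E : Type*} [NormedAddCommGroup E]
    [NormedSpace ℝ E] {f f' : ℝ → E} (hf : ∀ᶠ t in atTop, HasDerivAt f (f' t) t)
    (hf' : Tendsto f' atTop (𝓝 0)) : f =o[atTop] id := by
  refine isLittleO_iff.2 fun ε hε => ?_
  have hsmall : ∀ᶠ t in atTop, ‖f' t‖ ≤ ε / 2 :=
    (tendsto_norm_zero.comp hf').eventually (eventually_le_nhds (by positivity))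
  obtain ⟨T, hT⟩ := eventually_atTop.1 (hf.and (hsmall.and (eventually_ge_atTop 0)))
  have hT₀ : 0 ≤ T := (hT T le_rfl).2.2
  have hmvt : ∀ t ∈ Ici T, ‖f t - f T‖ ≤ ε / 2 * ‖t - T‖ :=
    fun t ht => (convex_Ici T).norm_image_sub_le_of_norm_hasDerivWithin_le
      (fun x hx => (hT x hx).1.hasDerivWithinAt) (fun x hx => (hT x hx).2.1) self_mem_Ici ht
  filter_upwards [eventually_ge_atTop T, eventually_ge_atTop (2 * ‖f T‖ / ε)] with t htT ht
  have hfT : 2 * ‖f T‖ ≤ ε * t := by rwa [div_le_iff₀' hε] at ht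
  have hdist := hmvt t htT
  rw [Real.norm_of_nonneg (sub_nonneg.2 htT)] at hdist
  rw [id, Real.norm_of_nonneg (hT₀.trans htT)]
  calc ‖f t‖ ≤ ‖f T‖ + ‖f t - f T‖ := norm_le_norm_add_norm_sub' _ _
    _ ≤ ε * t := by nlinarith

theorem tendsto_div_atTop_of_tendsto_deriv {f f' : ℝ → ℝ} {L : ℝ}
    (hf : ∀ᶠ t in atTop, HasDerivAt f (f' t) t) (hf' : Tendsto f' atTop (𝓝 L)) :
    Tendsto (fun t => f t / t) atTop (𝓝 L) := by
  have hlin : (fun t => f t - L * t) =o[atTop] id := by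
    refine isLittleO_id_atTop_of_tendsto_deriv_zero (f' := fun t => f' t - L) ?_ ?_
    · exact hf.mono fun t ht =>
        (ht.sub ((hasDerivAt_id t).const_mul L)).congr_deriv (by rw [mul_one])
    · simpa using hf'.sub_const L
  have hdiv := hlin.tendsto_div_nhds_zero.add_const L
  rw [zero_add] at hdiv
  refine hdiv.congr' ?_
  filter_upwards [eventually_ne_atTop 0] with t ht
  simp only [id, sub_div, mul_div_cancel_right₀ L ht, sub_add_cancel]

theorem HasDerivAt.inv_sq {r : ℝ → ℝ} {r' t : ℝ} (hr : HasDerivAt r r' t) (ht : r t ≠ 0) :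
    HasDerivAt (fun s => (r s ^ 2)⁻¹) (-2 * r' / r t ^ 3) t := by
  refine ((hr.fun_pow 2).inv (pow_ne_zero 2 ht)).congr_deriv ?_
  field_simp
  ring

theorem abs_slope_inv_sq_sub_le {c K ρ r' : ℝ} (hρ : 0 < ρ) (h : |r' + c * ρ ^ 3| ≤ K * ρ ^ 5) :
    |-2 * r' / ρ ^ 3 - 2 * c| ≤ 2 * K * ρ ^ 2 := by
  have hρ3 : 0 < ρ ^ 3 := by positivity
  have heq : -2 * r' / ρ ^ 3 - 2 * c = -2 * (r' + c * ρ ^ 3) / ρ ^ 3 := by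
    field_simp
    ring
  rw [heq, abs_div, abs_of_pos hρ3, div_le_iff₀ hρ3, abs_mul, abs_neg, abs_two]
  nlinarith

theorem cubic_leading_term_power_law_general (c K : ℝ) (hc : 0 < c)
    (r : ℝ → ℝ) (hpos : ∀ t : ℝ, 0 ≤ t → 0 < r t)
    (hdiff : ∀ t : ℝ, 0 ≤ t → DifferentiableAt ℝ r t)
    (hbound : ∀ t : ℝ, 0 ≤ t → |deriv r t + c * r t ^ 3| ≤ K * r t ^ 5)
    (hlim : Tendsto r atTop (nhds 0)) :
    Tendsto (fun t : ℝ => t * r t ^ 2) atTop (nhds (1 / (2 * c))) := by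
  have hderiv : ∀ᶠ t in atTop,
      HasDerivAt (fun s => (r s ^ 2)⁻¹) (-2 * deriv r t / r t ^ 3) t :=
    (eventually_ge_atTop 0).mono fun t ht => (hdiff t ht).hasDerivAt.inv_sq (hpos t ht).ne'
  have hslope : Tendsto (fun t => -2 * deriv r t / r t ^ 3) atTop (𝓝 (2 * c)) := by
    have hrem : Tendsto (fun t => 2 * K * r t ^ 2) atTop (𝓝 0) := by
      simpa using (hlim.pow 2).const_mul (2 * K)
    refine tendsto_iff_dist_tendsto_zero.2
      (squeeze_zero' (Eventually.of_forall fun _ => dist_nonneg) ?_ hrem)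
    filter_upwards [eventually_ge_atTop 0] with t ht
    exact abs_slope_inv_sq_sub_le (hpos t ht) (hbound t ht)
  have hgrowth := (tendsto_div_atTop_of_tendsto_deriv hderiv hslope).inv₀ (by positivity)
  rw [one_div]
  exact hgrowth.congr fun t => by simp only [inv_div, div_inv_eq_mul]

/-- If r > 0 is differentiable with |r' + c r³| ≤ K r⁵, c > 0, K ≥ 0, and r → 0,
    then t · r(t)² → 1/(2c). -/
theorem cubic_leading_term_power_law (c K : ℝ) (hc : 0 < c) (hK : 0 ≤ K)
    (r : ℝ → ℝ) (hpos : ∀ t : ℝ, 0 ≤ t → 0 < r t)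
    (hdiff : ∀ t : ℝ, 0 ≤ t → DifferentiableAt ℝ r t)
    (hbound : ∀ t : ℝ, 0 ≤ t → |deriv r t + c * r t ^ 3| ≤ K * r t ^ 5)
    (hlim : Tendsto r atTop (nhds 0)) :
    Tendsto (fun t : ℝ => t * r t ^ 2) atTop (nhds (1 / (2 * c))) :=
  cubic_leading_term_power_law_general c K hc r hpos hdiff hbound hlim
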